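/- Let u be a C² solution of u_{tt} − u_{xx} + u + (u³)_{xx} = 0 with ‖u‖_{L^∞} < 1/√3, and define u₁ = u_t, u₂ = (1−3u²)^{1/2} u_x, u₃ = u. Then (u₁,u₂,u₃) solves the symmetric first-order quasilinear system ∂_t u₁ − (1−3u₃²)^{1/2} ∂_x u₂ = −u₃ − 3u₂²u₃/(1−3u₃²), ∂_t u₂ − (1−3u₃²)^{1/2} ∂_x u₁ = −3u₁u₂u₃/(1−3u₃²), ∂_t u₃ = u₁. -/

import Mathlib

/-!
With `w = √(1 - 3u²)` the chain rule gives `∂w = -3u ∂u / w`, so `∂ₓ(w uₓ) = w uₓₓ - 3u uₓ² / w`.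
Multiplying by `w` and using `w² = 1 - 3u²` and `(u³)ₓₓ = 6u uₓ² + 3u² uₓₓ`, the first row
becomes the Klein–Gordon equation for `u`. In the second row the terms `w u_{tx}` and
`w u_{xt}` cancel by symmetry of the mixed partials, and only the derivative of the weight
survives.
-/

open Function

section Curried

variable {E : Type*} [NormedAddCommGroup E] [NormedSpace ℝ E] {u : ℝ → ℝ → E}

theorem HasFDerivAt.hasDerivAt_curry_fst {L : ℝ × ℝ →L[ℝ] E} {t x : ℝ}
    (h : HasFDerivAt (uncurry u) L (t, x)) : HasDerivAt (fun s => u s x) (L (1, 0)) t := by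
  simpa [comp_def] using h.comp_hasDerivAt t ((hasDerivAt_id t).prodMk (hasDerivAt_const t x))

theorem HasFDerivAt.hasDerivAt_curry_snd {L : ℝ × ℝ →L[ℝ] E} {t x : ℝ}
    (h : HasFDerivAt (uncurry u) L (t, x)) : HasDerivAt (fun y => u t y) (L (0, 1)) x := by
  simpa [comp_def] using h.comp_hasDerivAt x ((hasDerivAt_const x t).prodMk (hasDerivAt_id x))

theorem Differentiable.curry_fst (hu : Differentiable ℝ (uncurry u)) (x : ℝ) :
    Differentiable ℝ fun s => u s x :=
  fun t => (hu (t, x)).hasFDerivAt.hasDerivAt_curry_fst.differentiableAt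

theorem Differentiable.curry_snd (hu : Differentiable ℝ (uncurry u)) (t : ℝ) :
    Differentiable ℝ fun y => u t y :=
  fun x => (hu (t, x)).hasFDerivAt.hasDerivAt_curry_snd.differentiableAt

theorem uncurry_deriv_fst (hu : Differentiable ℝ (uncurry u)) :
    uncurry (fun t x => deriv (fun s => u s x) t) = fun p => fderiv ℝ (uncurry u) p (1, 0) :=
  funext fun p => (hu p).hasFDerivAt.hasDerivAt_curry_fst.deriv

theorem uncurry_deriv_snd (hu : Differentiable ℝ (uncurry u)) :
    uncurry (fun t x => deriv (fun y => u t y) x) = fun p => fderiv ℝ (uncurry u) p (0, 1) :=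
  funext fun p => (hu p).hasFDerivAt.hasDerivAt_curry_snd.deriv

theorem ContDiff.uncurry_deriv_fst {n : WithTop ℕ∞} (hu : ContDiff ℝ (n + 1) (uncurry u)) :
    ContDiff ℝ n (uncurry fun t x => deriv (fun s => u s x) t) := by
  rw [_root_.uncurry_deriv_fst (hu.differentiable (by simp))]
  exact (hu.fderiv_right le_rfl).clm_apply contDiff_const

theorem ContDiff.uncurry_deriv_snd {n : WithTop ℕ∞} (hu : ContDiff ℝ (n + 1) (uncurry u)) :
    ContDiff ℝ n (uncurry fun t x => deriv (fun y => u t y) x) := by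
  rw [_root_.uncurry_deriv_snd (hu.differentiable (by simp))]
  exact (hu.fderiv_right le_rfl).clm_apply contDiff_const

theorem deriv_deriv_comm (hu : ContDiff ℝ 2 (uncurry u)) (t x : ℝ) :
    deriv (fun s => deriv (fun y => u s y) x) t = deriv (fun y => deriv (fun s => u s y) t) x := by
  have hd : Differentiable ℝ (uncurry u) := hu.differentiable two_ne_zero
  have hd' : Differentiable ℝ (fderiv ℝ (uncurry u)) :=
    (hu.fderiv_right (m := 1) le_rfl).differentiable one_ne_zero
  have hD (v : ℝ × ℝ) : HasFDerivAt (fun p => fderiv ℝ (uncurry u) p v)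
      ((fderiv ℝ (fderiv ℝ (uncurry u)) (t, x)).flip v) (t, x) := by
    simpa using (hd' (t, x)).hasFDerivAt.clm_apply (hasFDerivAt_const v (t, x))
  have hfst : HasFDerivAt (uncurry fun t x => deriv (fun s => u s x) t)
      ((fderiv ℝ (fderiv ℝ (uncurry u)) (t, x)).flip (1, 0)) (t, x) := by
    rw [uncurry_deriv_fst hd]; exact hD (1, 0)
  have hsnd : HasFDerivAt (uncurry fun t x => deriv (fun y => u t y) x)
      ((fderiv ℝ (fderiv ℝ (uncurry u)) (t, x)).flip (0, 1)) (t, x) := by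
    rw [uncurry_deriv_snd hd]; exact hD (0, 1)
  rw [hsnd.hasDerivAt_curry_fst.deriv, hfst.hasDerivAt_curry_snd.deriv]
  exact second_derivative_symmetric (fun p => (hd p).hasFDerivAt) (hd' (t, x)).hasFDerivAt _ _

end Curried

theorem iteratedDeriv_two_eq_deriv_deriv (f : ℝ → ℝ) : iteratedDeriv 2 f = deriv (deriv f) := by
  rw [iteratedDeriv_succ, iteratedDeriv_one]

theorem iteratedDeriv_two_cube {g : ℝ → ℝ} {x : ℝ} (hg : Differentiable ℝ g)
    (hg' : DifferentiableAt ℝ (deriv g) x) :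
    iteratedDeriv 2 (fun y => g y ^ 3) x
      = 6 * g x * deriv g x ^ 2 + 3 * g x ^ 2 * iteratedDeriv 2 g x := by
  have hcube : deriv (fun y => g y ^ 3) = fun y => 3 * g y ^ 2 * deriv g y := by
    funext y
    simpa using ((hg y).hasDerivAt.fun_pow 3).deriv
  rw [iteratedDeriv_two_eq_deriv_deriv, iteratedDeriv_two_eq_deriv_deriv, hcube]
  have := (((hg x).hasDerivAt.fun_pow 2).const_mul 3).fun_mul hg'.hasDerivAt
  rw [this.deriv]
  push_cast
  ring

theorem one_sub_three_mul_sq_pos {a : ℝ} (ha : |a| < 1 / √3) : 0 < 1 - 3 * a ^ 2 := by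
  have : a ^ 2 < 1 / 3 := by
    simpa [sq_abs, div_pow] using pow_lt_pow_left₀ ha (abs_nonneg a) two_ne_zero
  linarith

theorem HasDerivAt.sqrt_one_sub_three_mul_sq {g : ℝ → ℝ} {g' x : ℝ} (hg : HasDerivAt g g' x)
    (hx : 0 < 1 - 3 * g x ^ 2) :
    HasDerivAt (fun y => √(1 - 3 * g y ^ 2)) (-3 * g x * g' / √(1 - 3 * g x ^ 2)) x := by
  convert ((hg.fun_pow 2).const_mul 3).const_sub 1 |>.sqrt hx.ne' using 1
  field_simp
  push_cast
  ring

theorem first_row_of_pde {a w q utt uxx : ℝ} (hw : w ^ 2 = 1 - 3 * a ^ 2) (hw0 : w ≠ 0)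
    (hpde : utt - uxx + a + (6 * a * q ^ 2 + 3 * a ^ 2 * uxx) = 0) :
    utt - w * (-3 * a * q / w * q + w * uxx) = -a - 3 * (w * q) ^ 2 * a / (1 - 3 * a ^ 2) := by
  have h₁ : w * (-3 * a * q / w * q + w * uxx) = -3 * a * q ^ 2 + w ^ 2 * uxx := by
    field_simp
  have h₂ : 3 * (w * q) ^ 2 * a / (1 - 3 * a ^ 2) = 3 * a * q ^ 2 := by
    rw [← hw]
    field_simp
  rw [h₁, h₂]
  linear_combination hpde - uxx * hw

theorem second_row {a w p q uxt : ℝ} (hw : w ^ 2 = 1 - 3 * a ^ 2) (hw0 : w ≠ 0) :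
    -3 * a * p / w * q + w * uxt - w * uxt = -3 * p * (w * q) * a / (1 - 3 * a ^ 2) := by
  rw [← hw]
  field_simp
  ring

/-- A `C²` solution of the quasilinear Klein–Gordon equation
`u_{tt} − u_{xx} + u + (u³)_{xx} = 0` with `‖u‖_{L^∞} < 1/√3` gives, via
`u₁ = u_t`, `u₂ = (1−3u²)^{1/2} u_x`, `u₃ = u`, a solution of the symmetric
first-order quasilinear system
`∂_t u₁ − (1−3u₃²)^{1/2} ∂_x u₂ = −u₃ − 3u₂²u₃/(1−3u₃²)`,
`∂_t u₂ − (1−3u₃²)^{1/2} ∂_x u₁ = −3u₁u₂u₃/(1−3u₃²)`,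
`∂_t u₃ = u₁`. -/
theorem quasilinear_symmetric_system
    (u : ℝ → ℝ → ℝ) (hu : ContDiff ℝ 2 (Function.uncurry u))
    (hbound : ∀ t x : ℝ, |u t x| < 1 / Real.sqrt 3)
    (hPDE : ∀ t x : ℝ,
      iteratedDeriv 2 (fun s : ℝ => u s x) t
        - iteratedDeriv 2 (fun y : ℝ => u t y) x
        + u t x
        + iteratedDeriv 2 (fun y : ℝ => (u t y) ^ 3) x = 0) :
    ∀ t x : ℝ,
      (deriv (fun s : ℝ => deriv (fun r : ℝ => u r x) s) t
          - Real.sqrt (1 - 3 * (u t x) ^ 2)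
            * deriv (fun y : ℝ =>
                Real.sqrt (1 - 3 * (u t y) ^ 2) * deriv (fun z : ℝ => u t z) y) x
        = -(u t x)
          - 3 * (Real.sqrt (1 - 3 * (u t x) ^ 2) * deriv (fun z : ℝ => u t z) x) ^ 2
            * u t x / (1 - 3 * (u t x) ^ 2)) ∧
      (deriv (fun s : ℝ =>
            Real.sqrt (1 - 3 * (u s x) ^ 2) * deriv (fun z : ℝ => u s z) x) t
          - Real.sqrt (1 - 3 * (u t x) ^ 2)
            * deriv (fun y : ℝ => deriv (fun s : ℝ => u s y) t) x
        = -3 * deriv (fun s : ℝ => u s x) t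
            * (Real.sqrt (1 - 3 * (u t x) ^ 2) * deriv (fun z : ℝ => u t z) x)
            * u t x / (1 - 3 * (u t x) ^ 2)) ∧
      (deriv (fun s : ℝ => u s x) t = deriv (fun s : ℝ => u s x) t) := by
  intro t x
  have hc : 0 < 1 - 3 * u t x ^ 2 := one_sub_three_mul_sq_pos (hbound t x)
  have hw : √(1 - 3 * u t x ^ 2) ^ 2 = 1 - 3 * u t x ^ 2 := Real.sq_sqrt hc.le
  have hw0 : √(1 - 3 * u t x ^ 2) ≠ 0 := (Real.sqrt_pos.2 hc).ne'
  have hu₁ : Differentiable ℝ (uncurry u) := hu.differentiable two_ne_zero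
  have hux : Differentiable ℝ (uncurry fun t x => deriv (fun y => u t y) x) :=
    (hu.uncurry_deriv_snd (n := 1)).differentiable one_ne_zero
  refine ⟨?_, ?_, rfl⟩
  · have hPDE := hPDE t x
    rw [iteratedDeriv_two_cube (hu₁.curry_snd t) (hux.curry_snd t x),
      iteratedDeriv_two_eq_deriv_deriv, iteratedDeriv_two_eq_deriv_deriv] at hPDE
    rw [(((hu₁.curry_snd t x).hasDerivAt.sqrt_one_sub_three_mul_sq hc).fun_mul
      (hux.curry_snd t x).hasDerivAt).deriv]
    exact first_row_of_pde hw hw0 hPDE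
  · rw [(((hu₁.curry_fst x t).hasDerivAt.sqrt_one_sub_three_mul_sq hc).fun_mul
      (hux.curry_fst x t).hasDerivAt).deriv, deriv_deriv_comm hu]
    exact second_row hw hw0
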